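/- With K ⊆ ℝ² defined as in the Whitney-circle construction (K = {(r cos α, r sin α) : 1 ≤ r ≤ 2, 0 ≤ α ≤ 1, ∀n (α ∈ I_n → r ≥ 1 + 2^(−n+1))}, where A = [0,1] \ ⋃_n I_n is nonempty), K equals the closure of the set of its points with norm strictly greater than 1: K = closure {p ∈ K : ‖p‖ > 1}. -/

import Mathlib

/-!
`K` is the image of the compact parameter set `whitneyParams I` under the continuous polar map,
so it is closed and contains the closure of its part outside the unit circle. Conversely, a
parameter `(1, α)` can only satisfy the constraints when `α` lies in no `I n`; then the whole
segment `(1, 2] × {α}` consists of parameters, and `(1, α)` is its limit.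
-/

open Real Set

noncomputable def polarVec (q : ℝ × ℝ) : EuclideanSpace ℝ (Fin 2) :=
  (WithLp.equiv 2 (Fin 2 → ℝ)).symm ![q.1 * cos q.2, q.1 * sin q.2]

theorem norm_polarVec {q : ℝ × ℝ} (hq : 0 ≤ q.1) : ‖polarVec q‖ = q.1 := by
  have hsq : (q.1 * cos q.2) ^ 2 + (q.1 * sin q.2) ^ 2 = q.1 ^ 2 := by
    linear_combination q.1 ^ 2 * cos_sq_add_sin_sq q.2
  simp [polarVec, EuclideanSpace.norm_eq, Fin.sum_univ_two, hsq, Real.sqrt_sq hq]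

theorem continuous_polarVec : Continuous polarVec := by
  refine (PiLp.continuous_toLp 2 fun _ : Fin 2 => ℝ).comp (continuous_pi fun i => ?_)
  fin_cases i <;> simp <;> fun_prop

theorem image_polarVec_sep_one_lt {Q : Set (ℝ × ℝ)} (hQ : ∀ q ∈ Q, 0 ≤ q.1) :
    polarVec '' {q ∈ Q | 1 < q.1} = {p ∈ polarVec '' Q | 1 < ‖p‖} := by
  ext p
  constructor
  · rintro ⟨q, ⟨hq, hq1⟩, rfl⟩
    exact ⟨mem_image_of_mem _ hq, by rwa [norm_polarVec (hQ q hq)]⟩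
  · rintro ⟨⟨q, hq, rfl⟩, hp1⟩
    exact ⟨q, ⟨hq, by rwa [norm_polarVec (hQ q hq)] at hp1⟩, rfl⟩

def whitneyParams (I : ℕ → Set ℝ) : Set (ℝ × ℝ) :=
  {q | 1 ≤ q.1 ∧ q.1 ≤ 2 ∧ 0 ≤ q.2 ∧ q.2 ≤ 1 ∧
    ∀ n : ℕ, q.2 ∈ I n → 1 + (2 : ℝ) ^ (-(n : ℤ) + 1) ≤ q.1}

section WhitneyParams

variable {I : ℕ → Set ℝ}

theorem isClosed_whitneyParams (hI : ∀ n, IsOpen (I n)) : IsClosed (whitneyParams I) := by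
  refine (isClosed_le continuous_const continuous_fst).and <|
    (isClosed_le continuous_fst continuous_const).and <|
    (isClosed_le continuous_const continuous_snd).and <|
    (isClosed_le continuous_snd continuous_const).and ?_
  simp only [ofPred_forall]
  exact isClosed_iInter fun n =>
    isClosed_imp ((hI n).preimage continuous_snd) (isClosed_le continuous_const continuous_fst)

theorem isCompact_whitneyParams (hI : ∀ n, IsOpen (I n)) : IsCompact (whitneyParams I) :=
  (isCompact_Icc.prod isCompact_Icc).of_isClosed_subset (isClosed_whitneyParams hI)
    fun _ ⟨h1, h2, h3, h4, _⟩ => ⟨⟨h1, h2⟩, h3, h4⟩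

theorem whitneyParams_subset_closure :
    whitneyParams I ⊆ closure {q ∈ whitneyParams I | 1 < q.1} := by
  rintro ⟨r, α⟩ ⟨h1, h2, h3, h4, h5⟩
  rcases h1.lt_or_eq with hr | rfl
  · exact subset_closure ⟨⟨h1, h2, h3, h4, h5⟩, hr⟩
  have hfree : ∀ n, α ∉ I n := fun n hn => by
    have := h5 n hn
    have : (0 : ℝ) < 2 ^ (-(n : ℤ) + 1) := by positivity
    linarith
  have hray : Ioc 1 2 ×ˢ {α} ⊆ {q ∈ whitneyParams I | 1 < q.1} := by
    rintro ⟨t, β⟩ ⟨⟨ht1, ht2⟩, rfl⟩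
    exact ⟨⟨ht1.le, ht2, h3, h4, fun n hn => absurd hn (hfree n)⟩, ht1⟩
  refine closure_mono hray ?_
  rw [closure_prod_eq, closure_Ioc (by norm_num), closure_singleton]
  exact ⟨⟨le_rfl, by norm_num⟩, rfl⟩

end WhitneyParams

open Real in
theorem whitney_circle_closure_general (I : ℕ → Set ℝ)
    (hI : ∀ n, ∃ a b : ℝ, I n = Set.Ioo a b) :
    let vec : ℝ → ℝ → EuclideanSpace ℝ (Fin 2) := fun u v =>
      (WithLp.equiv 2 (Fin 2 → ℝ)).symm ![u, v]
    let K : Set (EuclideanSpace ℝ (Fin 2)) :=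
      {p | ∃ r α : ℝ, 1 ≤ r ∧ r ≤ 2 ∧ 0 ≤ α ∧ α ≤ 1 ∧
        (∀ n : ℕ, α ∈ I n → 1 + (2 : ℝ)^(-(n : ℤ) + 1) ≤ r) ∧
        p = vec (r * cos α) (r * sin α)}
    K = closure {p | p ∈ K ∧ 1 < ‖p‖} := by
  intro vec K
  have hIopen : ∀ n, IsOpen (I n) := fun n => by
    obtain ⟨a, b, hab⟩ := hI n
    exact hab ▸ isOpen_Ioo
  have hK : K = polarVec '' whitneyParams I := by
    ext p
    constructor
    · rintro ⟨r, α, h1, h2, h3, h4, h5, rfl⟩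
      exact ⟨(r, α), ⟨h1, h2, h3, h4, h5⟩, rfl⟩
    · rintro ⟨⟨r, α⟩, ⟨h1, h2, h3, h4, h5⟩, rfl⟩
      exact ⟨r, α, h1, h2, h3, h4, h5, rfl⟩
  rw [hK, ← image_polarVec_sep_one_lt fun q hq => zero_le_one.trans hq.1]
  refine Subset.antisymm ?_ <| closure_minimal (image_mono (sep_subset _ _))
    ((isCompact_whitneyParams hIopen).image continuous_polarVec).isClosed
  exact (image_mono whitneyParams_subset_closure).trans
    (image_closure_subset_closure_image continuous_polarVec)

open Real in
theorem whitney_circle_closure (I : ℕ → Set ℝ)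
    (hI : ∀ n, ∃ a b : ℝ, I n = Set.Ioo a b)
    (hA : (Set.Icc (0 : ℝ) 1 \ ⋃ n, I n).Nonempty) :
    let vec : ℝ → ℝ → EuclideanSpace ℝ (Fin 2) := fun u v =>
      (WithLp.equiv 2 (Fin 2 → ℝ)).symm ![u, v]
    let K : Set (EuclideanSpace ℝ (Fin 2)) :=
      {p | ∃ r α : ℝ, 1 ≤ r ∧ r ≤ 2 ∧ 0 ≤ α ∧ α ≤ 1 ∧
        (∀ n : ℕ, α ∈ I n → 1 + (2 : ℝ)^(-(n : ℤ) + 1) ≤ r) ∧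
        p = vec (r * cos α) (r * sin α)}
    K = closure {p | p ∈ K ∧ 1 < ‖p‖} :=
  whitney_circle_closure_general I hI
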